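/- Let ≼ be any monomial order on the monomials of Z2[X] such that (i) s ≺ α for every α ∈ C, and (ii) for every g ∈ D and every polynomial f with g + f ∈ ⟨𝓕⟩ one has g ≼ f (with ≼ extended to polynomials; in particular g ∉ ⟨𝓕⟩). Then every reduced Gröbner basis G of the ideal ⟨𝓕⟩ with respect to ≼ satisfies |G| ≥ 2^(2^n) and moreover |{p ∈ G : deg(p) ≥ 2^(2^n)}| ≥ 2^(2^n), where deg(p) denotes the maximal total degree of a monomial occurring in p. -/
import Mathlib


open MvPolynomial

/-- Monomials in the variables `σ`, represented by their exponent vectors. -/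
abbrev Mon (σ : Type*) := σ →₀ ℕ

/-- A monomial order: a total order on monomials such that `1 ≼ t` for every monomial `t`
and `t ≼ u → t·v ≼ u·v` (written additively on exponent vectors). -/
structure MonOrd (σ : Type*) where
  le : Mon σ → Mon σ → Prop
  le_refl : ∀ t, le t t
  le_trans : ∀ t u v, le t u → le u v → le t v
  le_antisymm : ∀ t u, le t u → le u t → t = u
  le_total : ∀ t u, le t u ∨ le u t
  zero_le : ∀ t, le 0 t
  add_le_add : ∀ t u v, le t u → le (t + v) (u + v)

/-- Strict version of a monomial order. -/
def MonOrd.lt {σ : Type*} (μ : MonOrd σ) (t u : Mon σ) : Prop := μ.le t u ∧ t ≠ u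

/-- The extension of a monomial order (given by the relation `r` on monomials) to polynomials:
`g ≼ f` iff `g = f` or the greatest monomial on which `f` and `g` differ occurs in `f`.
(This is the closed form of the recursive definition: `g ≼ f` iff `g = f`, or
`HT g ≺ HT f`, or `HT g = HT f` and `g - HT g ≼ f - HT f`, with `0` the least polynomial.) -/
def polyLe {σ : Type*} (r : Mon σ → Mon σ → Prop) (g f : MvPolynomial σ (ZMod 2)) : Prop :=
  g = f ∨ ∃ t, t ∈ f.support ∧ t ∉ g.support ∧
    ∀ u : Mon σ, ((u ∈ f.support ∧ u ∉ g.support) ∨ (u ∈ g.support ∧ u ∉ f.support)) → r u t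

/-- Strict extension of a monomial order to polynomials. -/
def polyLt {σ : Type*} (r : Mon σ → Mon σ → Prop) (g f : MvPolynomial σ (ZMod 2)) : Prop :=
  polyLe r g f ∧ g ≠ f

/-- `S_F`: the set of non-residual polynomials with respect to `F` and the monomial order `r`,
i.e. those `f` admitting a `g` with `f + g ∈ ⟨F⟩` and `g ≺ f`. -/
def SF {σ : Type*} (r : Mon σ → Mon σ → Prop) (F : Set (MvPolynomial σ (ZMod 2))) :
    Set (MvPolynomial σ (ZMod 2)) :=
  {f | ∃ g, f + g ∈ Ideal.span F ∧ polyLt r g f}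

/-- `t` is the head monomial (`r`-greatest monomial) of the polynomial `f`. -/
def IsHT {σ : Type*} (r : Mon σ → Mon σ → Prop) (f : MvPolynomial σ (ZMod 2)) (t : Mon σ) :
    Prop :=
  t ∈ f.support ∧ ∀ u ∈ f.support, r u t

/-- `HT(S)`: the set of head monomials (as polynomials) of the nonzero elements of `S`. -/
def HTset {σ : Type*} (r : Mon σ → Mon σ → Prop) (S : Set (MvPolynomial σ (ZMod 2))) :
    Set (MvPolynomial σ (ZMod 2)) :=
  {p | ∃ f ∈ S, f ≠ 0 ∧ ∃ t, IsHT r f t ∧ p = monomial t 1}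

/-- The divisibility (componentwise) order `◁` on monomials. -/
def triMon {σ : Type*} (t u : Mon σ) : Prop := ∀ x, t x ≤ u x

/-- The order `◁` on polynomials: `p ◁ q` iff there is an injective map `φ` from the
monomials of `p` to the monomials of `q` with `t ◁ φ t` for each monomial `t` of `p`. -/
def triPoly {σ : Type*} (p q : MvPolynomial σ (ZMod 2)) : Prop :=
  ∃ φ : Mon σ → Mon σ, Set.InjOn φ ↑p.support ∧ ∀ t ∈ p.support, φ t ∈ q.support ∧ triMon t (φ t)

/-- Upward closure with respect to `◁`. -/
def upClo {σ : Type*} (A : Set (MvPolynomial σ (ZMod 2))) : Set (MvPolynomial σ (ZMod 2)) :=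
  {q | ∃ p ∈ A, triPoly p q}

/-- `Min_◁(A)`: the `◁`-minimal elements of `A`. -/
def minTri {σ : Type*} (A : Set (MvPolynomial σ (ZMod 2))) : Set (MvPolynomial σ (ZMod 2)) :=
  {p | p ∈ A ∧ ∀ q ∈ A, triPoly q p → q = p}

/-- `G` is a Gröbner basis of the ideal `I` with respect to the monomial order `r`. -/
def IsGB {σ : Type*} (r : Mon σ → Mon σ → Prop) (G : Finset (MvPolynomial σ (ZMod 2)))
    (I : Ideal (MvPolynomial σ (ZMod 2))) : Prop :=
  (↑G : Set (MvPolynomial σ (ZMod 2))) ⊆ ↑I ∧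
    Ideal.span (↑G : Set (MvPolynomial σ (ZMod 2))) = I ∧
    Ideal.span (HTset r (↑I : Set (MvPolynomial σ (ZMod 2)))) = Ideal.span (HTset r ↑G)

/-- `G` is a reduced Gröbner basis of `I` with respect to `r`. -/
def IsReducedGB {σ : Type*} (r : Mon σ → Mon σ → Prop) (G : Finset (MvPolynomial σ (ZMod 2)))
    (I : Ideal (MvPolynomial σ (ZMod 2))) : Prop :=
  IsGB r G I ∧ ∀ f ∈ G, ¬ ∀ t ∈ f.support,
    (monomial t 1 : MvPolynomial σ (ZMod 2)) ∈
      Ideal.span (HTset r ((↑G : Set (MvPolynomial σ (ZMod 2))) \ {f}))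

/-- The variable set `X`: the special variables `s, ℓ, c, c̄, b, b̄` together with, for each
`0 ≤ i ≤ n`, the variables `s_i, f_i, q_{ji}, c_{ji}, b_{ji}` (`1 ≤ j ≤ 4`, encoded by
`j : Fin 4`) and their barred copies (`bar = true`). -/
inductive MVar (n : ℕ) : Type where
  | vs | vl | vc | vcb | vb | vbb
  | vS (bar : Bool) (i : Fin (n+1))
  | vF (bar : Bool) (i : Fin (n+1))
  | vQ (bar : Bool) (j : Fin 4) (i : Fin (n+1))
  | vC (bar : Bool) (j : Fin 4) (i : Fin (n+1))
  | vB (bar : Bool) (j : Fin 4) (i : Fin (n+1))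
deriving DecidableEq

open MVar

abbrev MPoly (n : ℕ) := MvPolynomial (MVar n) (ZMod 2)

/-- `e(n) = 2^(2^n)`. -/
def en (n : ℕ) : ℕ := 2 ^ 2 ^ n

/-- The set `P_0` (barred copy if `bar = true`). -/
def P0 (n : ℕ) (bar : Bool) : Set (MPoly n) :=
  {p | ∃ j : Fin 4, p =
    X (vB bar j 0) ^ 2 * X (vC bar j 0) * X (vF bar 0) + X (vC bar j 0) * X (vS bar 0)}

/-- The set `P_m` for `m = i+1`, `i : Fin n` (barred copy if `bar = true`).
Here `i.succ` plays the role of `m` and `i.castSucc` the role of `m-1`; the indices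
`1,2,3,4` of the paper are encoded as `0,1,2,3 : Fin 4`. -/
def Pm (n : ℕ) (bar : Bool) (i : Fin n) : Set (MPoly n) :=
  ({ X (vQ bar 0 i.succ) * X (vC bar 0 i.castSucc) * X (vS bar i.castSucc) + X (vS bar i.succ),
    X (vQ bar 1 i.succ) * X (vC bar 1 i.castSucc) * X (vS bar i.castSucc)
      + X (vQ bar 0 i.succ) * X (vB bar 0 i.castSucc) * X (vC bar 0 i.castSucc)
        * X (vF bar i.castSucc),
    X (vQ bar 2 i.succ) * X (vC bar 2 i.castSucc) * X (vF bar i.castSucc)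
      + X (vQ bar 1 i.succ) * X (vC bar 1 i.castSucc) * X (vF bar i.castSucc),
    X (vQ bar 2 i.succ) * X (vB bar 0 i.castSucc) * X (vC bar 2 i.castSucc)
        * X (vS bar i.castSucc)
      + X (vQ bar 1 i.succ) * X (vB bar 3 i.castSucc) * X (vC bar 1 i.castSucc)
        * X (vS bar i.castSucc),
    X (vQ bar 3 i.succ) * X (vB bar 3 i.castSucc) * X (vC bar 3 i.castSucc)
        * X (vF bar i.castSucc)
      + X (vQ bar 2 i.succ) * X (vC bar 2 i.castSucc) * X (vS bar i.castSucc),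
    X (vQ bar 3 i.succ) * X (vC bar 3 i.castSucc) * X (vS bar i.castSucc)
      + X (vF bar i.succ) } : Set (MPoly n))
  ∪ {p | ∃ j : Fin 4, p =
      X (vQ bar 1 i.succ) * X (vB bar 2 i.castSucc) * X (vB bar j i.succ) * X (vC bar j i.succ)
          * X (vF bar i.castSucc)
        + X (vQ bar 1 i.succ) * X (vB bar 1 i.castSucc) * X (vC bar j i.succ)
          * X (vF bar i.castSucc)}

/-- The set `P = P_0 ∪ P_1 ∪ ⋯ ∪ P_n`; for `bar = true` this is the barred copy `P̄`
(the image of `P` under the substitution replacing each variable by its barred version). -/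
def PP (n : ℕ) (bar : Bool) : Set (MPoly n) := P0 n bar ∪ ⋃ i : Fin n, Pm n bar i

/-- The set `G` of seven extra binomials. -/
def GG (n : ℕ) : Set (MPoly n) :=
  { X (vB false 3 (Fin.last n)) * X vl * X vb + X vl * X vc,
    X (vB false 3 (Fin.last n)) * X vl * X vbb + X vl * X vcb,
    X (vC false 3 (Fin.last n)) * X (vF false (Fin.last n)) + X vl,
    X (vC true 3 (Fin.last n)) * X (vF true (Fin.last n))
      + X (vC false 3 (Fin.last n)) * X (vS false (Fin.last n)),
    X (vB true 3 (Fin.last n)) * X (vC false 3 (Fin.last n)) * X (vS false (Fin.last n))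
      + X (vC false 3 (Fin.last n)) * X (vS false (Fin.last n)) * X vb,
    X (vB true 3 (Fin.last n)) * X (vC false 3 (Fin.last n)) * X (vS false (Fin.last n))
      + X (vC false 3 (Fin.last n)) * X (vS false (Fin.last n)) * X vbb,
    X (vC true 3 (Fin.last n)) * X (vS true (Fin.last n)) + X vs }

/-- The set `𝓕 = P ∪ P̄ ∪ G`. -/
def FF (n : ℕ) : Set (MPoly n) := PP n false ∪ PP n true ∪ GG n

/-- The set `C = {ℓ c̄^{m1} c^{m2} : m1 + m2 = e(n)}` of monomials. -/
def Cmon (n : ℕ) : Set (Mon (MVar n)) :=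
  {α | ∃ m1 m2 : ℕ, m1 + m2 = en n ∧
    α = Finsupp.single vl 1 + Finsupp.single vcb m1 + Finsupp.single vc m2}

/-- The set `D = {ℓ^j c̄^{m1} c^{m2} : j ∈ {0,1}, j + m1 + m2 ≤ e(n)}` of monomials. -/
def Dmon (n : ℕ) : Set (Mon (MVar n)) :=
  {α | ∃ j m1 m2 : ℕ, j ≤ 1 ∧ j + m1 + m2 ≤ en n ∧
    α = Finsupp.single vl j + Finsupp.single vcb m1 + Finsupp.single vc m2}

/-- An injective rank function on the variables realizing the variable ordering
(from least to greatest): `s, c, c̄, ℓ, b, b̄`; then `s_0,…,s_n`; `f_0,…,f_n`;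
`c_{10},…,c_{1n}; …; c_{40},…,c_{4n}`; `b_{10},…,b_{4n}`; `q_{10},…,q_{4n}`;
then the barred variables in the same pattern. -/
def vrank (n : ℕ) : MVar n → ℕ
  | .vs => 0
  | .vc => 1
  | .vcb => 2
  | .vl => 3
  | .vb => 4
  | .vbb => 5
  | .vS bar i => 6 + (cond bar (14 * (n+1)) 0) + (i : ℕ)
  | .vF bar i => 6 + (cond bar (14 * (n+1)) 0) + (n+1) + (i : ℕ)
  | .vC bar j i => 6 + (cond bar (14 * (n+1)) 0) + 2*(n+1) + (j : ℕ)*(n+1) + (i : ℕ)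
  | .vB bar j i => 6 + (cond bar (14 * (n+1)) 0) + 6*(n+1) + (j : ℕ)*(n+1) + (i : ℕ)
  | .vQ bar j i => 6 + (cond bar (14 * (n+1)) 0) + 10*(n+1) + (j : ℕ)*(n+1) + (i : ℕ)

/-- The lexicographic monomial order on `X`: `t ≼_lex u` iff `t = u` or the exponents differ
somewhere and at the greatest variable (w.r.t. `vrank`) where they differ, the exponent of
`t` is smaller. -/
def lexLe (n : ℕ) (t u : Mon (MVar n)) : Prop :=
  t = u ∨ ∃ x : MVar n, t x < u x ∧ ∀ y : MVar n, vrank n x < vrank n y → t y = u y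

/-- The total degree of a monomial. -/
def mdeg {σ : Type*} (t : Mon σ) : ℕ := t.sum fun _ k => k

/-- The degree lexicographic monomial order. -/
def degLexLe (n : ℕ) (t u : Mon (MVar n)) : Prop :=
  mdeg t < mdeg u ∨ (mdeg t = mdeg u ∧ lexLe n t u)

/-- Weighted degree of a monomial with respect to a weight map `w`. -/
noncomputable def wdeg {n : ℕ} (w : MVar n → ℝ) (t : Mon (MVar n)) : ℝ :=
  t.sum fun x k => (k : ℝ) * w x

/-- The weighted monomial order determined by the weight map `w`. -/
def wLe {n : ℕ} (w : MVar n → ℝ) (t u : Mon (MVar n)) : Prop := t = u ∨ wdeg w t < wdeg w u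


namespace Stmt4Aux
open MVar

lemma zmod2_eq_one : ∀ {a : ZMod 2}, a ≠ 0 → a = 1 := by decide

noncomputable def qk (n : ℕ) : MPoly n →+* (MPoly n ⧸ Ideal.span (FF n)) :=
  Ideal.Quotient.mk _

noncomputable def xq (n : ℕ) (v : MVar n) : MPoly n ⧸ Ideal.span (FF n) := qk n (X v)

lemma mem_iff_qk {n : ℕ} {p q : MPoly n} :
    p + q ∈ Ideal.span (FF n) ↔ qk n p = qk n q := by
  rw [qk, Ideal.Quotient.eq, CharTwo.sub_eq_add]

lemma FF_eq {n : ℕ} {p q : MPoly n} (h : p + q ∈ FF n) : qk n p = qk n q :=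
  mem_iff_qk.mp (Ideal.subset_span h)

lemma P0_sub {n : ℕ} (bar : Bool) : P0 n bar ⊆ FF n := fun p hp => by
  cases bar
  · exact Or.inl (Or.inl (Or.inl hp))
  · exact Or.inl (Or.inr (Or.inl hp))

lemma Pm_sub {n : ℕ} (bar : Bool) (i : Fin n) : Pm n bar i ⊆ FF n := fun p hp => by
  have h : p ∈ PP n bar := Or.inr (Set.mem_iUnion.mpr ⟨i, hp⟩)
  cases bar
  · exact Or.inl (Or.inl h)
  · exact Or.inl (Or.inr h)

lemma GG_sub {n : ℕ} : GG n ⊆ FF n := fun _ hp => Or.inr hp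

lemma e0 {n : ℕ} (bar : Bool) (j : Fin 4) :
    xq n (vB bar j 0) ^ 2 * xq n (vC bar j 0) * xq n (vF bar 0)
      = xq n (vC bar j 0) * xq n (vS bar 0) := by
  have h := FF_eq (P0_sub bar (show _ ∈ P0 n bar from ⟨j, rfl⟩))
  simpa only [xq, map_mul, map_pow] using h


section R
variable {n : ℕ} (bar : Bool) (i : Fin n)

lemma eR1 :
    xq n (vQ bar 0 i.succ) * xq n (vC bar 0 i.castSucc) * xq n (vS bar i.castSucc)
      = xq n (vS bar i.succ) := by
  simp only [xq, ← map_pow, ← map_mul]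
  refine FF_eq ?_
  exact Pm_sub bar i (Or.inl (by simp))

lemma eR2 :
    xq n (vQ bar 1 i.succ) * xq n (vC bar 1 i.castSucc) * xq n (vS bar i.castSucc)
      = xq n (vQ bar 0 i.succ) * xq n (vB bar 0 i.castSucc) * xq n (vC bar 0 i.castSucc)
        * xq n (vF bar i.castSucc) := by
  simp only [xq, ← map_pow, ← map_mul]
  refine FF_eq ?_
  exact Pm_sub bar i (Or.inl (by simp))

lemma eR3 :
    xq n (vQ bar 2 i.succ) * xq n (vC bar 2 i.castSucc) * xq n (vF bar i.castSucc)
      = xq n (vQ bar 1 i.succ) * xq n (vC bar 1 i.castSucc) * xq n (vF bar i.castSucc) := by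
  simp only [xq, ← map_pow, ← map_mul]
  refine FF_eq ?_
  exact Pm_sub bar i (Or.inl (by simp))

lemma eR4 :
    xq n (vQ bar 2 i.succ) * xq n (vB bar 0 i.castSucc) * xq n (vC bar 2 i.castSucc)
        * xq n (vS bar i.castSucc)
      = xq n (vQ bar 1 i.succ) * xq n (vB bar 3 i.castSucc) * xq n (vC bar 1 i.castSucc)
        * xq n (vS bar i.castSucc) := by
  simp only [xq, ← map_pow, ← map_mul]
  refine FF_eq ?_
  exact Pm_sub bar i (Or.inl (by simp))

lemma eR5 :
    xq n (vQ bar 3 i.succ) * xq n (vB bar 3 i.castSucc) * xq n (vC bar 3 i.castSucc)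
        * xq n (vF bar i.castSucc)
      = xq n (vQ bar 2 i.succ) * xq n (vC bar 2 i.castSucc) * xq n (vS bar i.castSucc) := by
  simp only [xq, ← map_pow, ← map_mul]
  refine FF_eq ?_
  exact Pm_sub bar i (Or.inl (by simp))

lemma eR6 :
    xq n (vQ bar 3 i.succ) * xq n (vC bar 3 i.castSucc) * xq n (vS bar i.castSucc)
      = xq n (vF bar i.succ) := by
  simp only [xq, ← map_pow, ← map_mul]
  refine FF_eq ?_
  exact Pm_sub bar i (Or.inl (by simp))

lemma eR7 (j : Fin 4) :
    xq n (vQ bar 1 i.succ) * xq n (vB bar 2 i.castSucc) * xq n (vB bar j i.succ)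
        * xq n (vC bar j i.succ) * xq n (vF bar i.castSucc)
      = xq n (vQ bar 1 i.succ) * xq n (vB bar 1 i.castSucc) * xq n (vC bar j i.succ)
        * xq n (vF bar i.castSucc) := by
  simp only [xq, ← map_pow, ← map_mul]
  refine FF_eq ?_
  exact Pm_sub bar i (Or.inr ⟨j, rfl⟩)

end R

section G
variable {n : ℕ}

lemma eG1 : xq n (vB false 3 (Fin.last n)) * xq n vl * xq n vb = xq n vl * xq n vc := by
  simp only [xq, ← map_pow, ← map_mul]
  refine FF_eq ?_
  refine GG_sub ?_
  rw [GG]; simp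

lemma eG2 : xq n (vB false 3 (Fin.last n)) * xq n vl * xq n vbb = xq n vl * xq n vcb := by
  simp only [xq, ← map_pow, ← map_mul]
  refine FF_eq ?_
  refine GG_sub ?_
  rw [GG]; simp

lemma eG3 : xq n (vC false 3 (Fin.last n)) * xq n (vF false (Fin.last n)) = xq n vl := by
  simp only [xq, ← map_pow, ← map_mul]
  refine FF_eq ?_
  refine GG_sub ?_
  rw [GG]; simp

lemma eG4 : xq n (vC true 3 (Fin.last n)) * xq n (vF true (Fin.last n))
    = xq n (vC false 3 (Fin.last n)) * xq n (vS false (Fin.last n)) := by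
  simp only [xq, ← map_pow, ← map_mul]
  refine FF_eq ?_
  refine GG_sub ?_
  rw [GG]; simp

lemma eG5 : xq n (vB true 3 (Fin.last n)) * xq n (vC false 3 (Fin.last n))
      * xq n (vS false (Fin.last n))
    = xq n (vC false 3 (Fin.last n)) * xq n (vS false (Fin.last n)) * xq n vb := by
  simp only [xq, ← map_pow, ← map_mul]
  refine FF_eq ?_
  refine GG_sub ?_
  rw [GG]; simp

lemma eG6 : xq n (vB true 3 (Fin.last n)) * xq n (vC false 3 (Fin.last n))
      * xq n (vS false (Fin.last n))
    = xq n (vC false 3 (Fin.last n)) * xq n (vS false (Fin.last n)) * xq n vbb := by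
  simp only [xq, ← map_pow, ← map_mul]
  refine FF_eq ?_
  refine GG_sub ?_
  rw [GG]; simp

lemma eG7 : xq n (vC true 3 (Fin.last n)) * xq n (vS true (Fin.last n)) = xq n vs := by
  simp only [xq, ← map_pow, ← map_mul]
  refine FF_eq ?_
  refine GG_sub ?_
  rw [GG]; simp

end G
end Stmt4Aux
section Abstract
variable {R : Type*} [CommRing R]

lemma step_abstract (E : ℕ) (hE : 1 ≤ E)
    (q1 q2 q3 q4 c1 c2 c3 c4 b1 b2 b3 b4 s f cm bm sm fm : R)
    (hR1 : q1 * c1 * s = sm)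
    (hR2 : q2 * c2 * s = q1 * b1 * c1 * f)
    (hR3 : q3 * c3 * f = q2 * c2 * f)
    (hR4 : q3 * b1 * c3 * s = q2 * b4 * c2 * s)
    (hR5 : q4 * b4 * c4 * f = q3 * c3 * s)
    (hR6 : q4 * c4 * s = fm)
    (hR7 : q2 * b3 * bm * cm * f = q2 * b2 * cm * f)
    (hI1 : c1 * s = b1 ^ E * c1 * f)
    (hI2 : c2 * s = b2 ^ E * c2 * f)
    (hI3 : c3 * s = b3 ^ E * c3 * f)
    (hI4 : c4 * s = b4 ^ E * c4 * f) :
    cm * sm = bm ^ (E * E) * cm * fm := by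
  have h7 : ∀ r : ℕ, q2 * b2 ^ r * cm * f = q2 * b3 ^ r * bm ^ r * cm * f := by
    intro r
    induction r with
    | zero => ring
    | succ r ih =>
      calc q2 * b2 ^ (r+1) * cm * f = b2 * (q2 * b2 ^ r * cm * f) := by ring
        _ = b2 * (q2 * b3 ^ r * bm ^ r * cm * f) := by rw [ih]
        _ = (b3 ^ r * bm ^ r) * (q2 * b2 * cm * f) := by ring
        _ = (b3 ^ r * bm ^ r) * (q2 * b3 * bm * cm * f) := by rw [hR7]
        _ = q2 * b3 ^ (r+1) * bm ^ (r+1) * cm * f := by ring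
  have hpass : q2 * c2 * s * cm = q3 * c3 * s * bm ^ E * cm := by
    calc q2 * c2 * s * cm = (q2 * cm) * (c2 * s) := by ring
      _ = (q2 * cm) * (b2 ^ E * c2 * f) := by rw [hI2]
      _ = c2 * (q2 * b2 ^ E * cm * f) := by ring
      _ = c2 * (q2 * b3 ^ E * bm ^ E * cm * f) := by rw [h7]
      _ = (b3 ^ E * bm ^ E * cm) * (q2 * c2 * f) := by ring
      _ = (b3 ^ E * bm ^ E * cm) * (q3 * c3 * f) := by rw [hR3]
      _ = (q3 * bm ^ E * cm) * (b3 ^ E * c3 * f) := by ring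
      _ = (q3 * bm ^ E * cm) * (c3 * s) := by rw [← hI3]
      _ = q3 * c3 * s * bm ^ E * cm := by ring
  have hloop : ∀ r : ℕ, q3 * c3 * s * b1 ^ r * cm
      = q3 * c3 * s * b4 ^ r * bm ^ (E * r) * cm := by
    intro r
    induction r with
    | zero => ring
    | succ r ih =>
      calc q3 * c3 * s * b1 ^ (r+1) * cm
          = (b1 ^ r * cm) * (q3 * b1 * c3 * s) := by ring
        _ = (b1 ^ r * cm) * (q2 * b4 * c2 * s) := by rw [hR4]
        _ = b4 * (q2 * c2 * s * cm) * b1 ^ r := by ring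
        _ = b4 * (q3 * c3 * s * bm ^ E * cm) * b1 ^ r := by rw [hpass]
        _ = (b4 * bm ^ E) * (q3 * c3 * s * b1 ^ r * cm) := by ring
        _ = (b4 * bm ^ E) * (q3 * c3 * s * b4 ^ r * bm ^ (E * r) * cm) := by rw [ih]
        _ = q3 * c3 * s * b4 ^ (r+1) * bm ^ (E * (r+1)) * cm := by
              rw [mul_add E r 1, pow_add, pow_succ]; ring
  obtain ⟨E', rfl⟩ : ∃ E', E = E' + 1 := ⟨E - 1, (Nat.succ_pred_eq_of_pos hE).symm⟩
  calc cm * sm = cm * (q1 * c1 * s) := by rw [hR1]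
    _ = (cm * q1) * (c1 * s) := by ring
    _ = (cm * q1) * (b1 ^ (E'+1) * c1 * f) := by rw [hI1]
    _ = (cm * b1 ^ E') * (q1 * b1 * c1 * f) := by ring
    _ = (cm * b1 ^ E') * (q2 * c2 * s) := by rw [← hR2]
    _ = (q2 * c2 * s * cm) * b1 ^ E' := by ring
    _ = (q3 * c3 * s * bm ^ (E'+1) * cm) * b1 ^ E' := by rw [hpass]
    _ = (q3 * c3 * s * b1 ^ E' * cm) * bm ^ (E'+1) := by ring
    _ = (q3 * c3 * s * b4 ^ E' * bm ^ ((E'+1) * E') * cm) * bm ^ (E'+1) := by rw [hloop]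
    _ = (b4 ^ E' * bm ^ ((E'+1) * E') * bm ^ (E'+1) * cm) * (q3 * c3 * s) := by ring
    _ = (b4 ^ E' * bm ^ ((E'+1) * E') * bm ^ (E'+1) * cm) * (q4 * b4 * c4 * f) := by
          rw [hR5]
    _ = (q4 * bm ^ ((E'+1) * E') * bm ^ (E'+1) * cm) * (b4 ^ (E'+1) * c4 * f) := by ring
    _ = (q4 * bm ^ ((E'+1) * E') * bm ^ (E'+1) * cm) * (c4 * s) := by rw [← hI4]
    _ = (bm ^ ((E'+1) * E') * bm ^ (E'+1) * cm) * (q4 * c4 * s) := by ring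
    _ = (bm ^ ((E'+1) * E') * bm ^ (E'+1) * cm) * fm := by rw [hR6]
    _ = bm ^ ((E'+1) * (E'+1)) * cm * fm := by rw [show (E'+1)*(E'+1) = (E'+1)*E' + (E'+1) from by ring, pow_add]; ring

end Abstract
namespace Stmt4Aux
open MVar

lemma en_succ (k : ℕ) : en (k + 1) = en k * en k := by
  rw [en, en, pow_succ, pow_mul, pow_two]

lemma one_le_en (k : ℕ) : 1 ≤ en k := Nat.one_le_two_pow

lemma key (n : ℕ) (bar : Bool) :
    ∀ (m : ℕ) (h : m < n + 1) (j : Fin 4),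
      xq n (vC bar j ⟨m, h⟩) * xq n (vS bar ⟨m, h⟩)
        = xq n (vB bar j ⟨m, h⟩) ^ en m * xq n (vC bar j ⟨m, h⟩) * xq n (vF bar ⟨m, h⟩) := by
  intro m
  induction m with
  | zero =>
    intro h j
    have h0 : (0 : Fin (n + 1)) = ⟨0, h⟩ := by ext; simp
    have := e0 (n := n) bar j
    rw [h0] at this
    rw [show en 0 = 2 from rfl]
    exact this.symm
  | succ k IH =>
    intro h j
    have hk : k < n := Nat.succ_lt_succ_iff.mp h
    set i : Fin n := ⟨k, hk⟩ with hi
    have hcs : i.castSucc = (⟨k, Nat.lt_of_succ_lt h⟩ : Fin (n + 1)) := rfl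
    have hsc : i.succ = (⟨k + 1, h⟩ : Fin (n + 1)) := rfl
    have IH' : ∀ j' : Fin 4,
        xq n (vC bar j' i.castSucc) * xq n (vS bar i.castSucc)
          = xq n (vB bar j' i.castSucc) ^ en k * xq n (vC bar j' i.castSucc)
            * xq n (vF bar i.castSucc) := by
      intro j'
      rw [hcs]
      exact IH (Nat.lt_of_succ_lt h) j'
    rw [← hsc]
    rw [en_succ]
    exact step_abstract (en k) (one_le_en k)
      (xq n (vQ bar 0 i.succ)) (xq n (vQ bar 1 i.succ)) (xq n (vQ bar 2 i.succ))
      (xq n (vQ bar 3 i.succ))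
      (xq n (vC bar 0 i.castSucc)) (xq n (vC bar 1 i.castSucc)) (xq n (vC bar 2 i.castSucc))
      (xq n (vC bar 3 i.castSucc))
      (xq n (vB bar 0 i.castSucc)) (xq n (vB bar 1 i.castSucc)) (xq n (vB bar 2 i.castSucc))
      (xq n (vB bar 3 i.castSucc))
      (xq n (vS bar i.castSucc)) (xq n (vF bar i.castSucc))
      (xq n (vC bar j i.succ)) (xq n (vB bar j i.succ)) (xq n (vS bar i.succ))
      (xq n (vF bar i.succ))
      (eR1 bar i) (eR2 bar i) (eR3 bar i) (eR4 bar i) (eR5 bar i) (eR6 bar i) (eR7 bar i j)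
      (IH' 0) (IH' 1) (IH' 2) (IH' 3)

end Stmt4Aux
section Pump
variable {R : Type*} [CommRing R]

lemma pump1 (l b4 b c : R) (h : b4 * l * b = l * c) :
    ∀ a : ℕ, l * c ^ a = b4 ^ a * l * b ^ a := by
  intro a
  induction a with
  | zero => ring
  | succ a ih =>
    calc l * c ^ (a+1) = (l * c ^ a) * c := by ring
      _ = (b4 ^ a * l * b ^ a) * c := by rw [ih]
      _ = (b4 ^ a * b ^ a) * (l * c) := by ring
      _ = (b4 ^ a * b ^ a) * (b4 * l * b) := by rw [h]
      _ = b4 ^ (a+1) * l * b ^ (a+1) := by ring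

lemma pump2 (u bb4 b : R) (h : bb4 * u = u * b) :
    ∀ a : ℕ, u * b ^ a = bb4 ^ a * u := by
  intro a
  induction a with
  | zero => ring
  | succ a ih =>
    calc u * b ^ (a+1) = (u * b ^ a) * b := by ring
      _ = (bb4 ^ a * u) * b := by rw [ih]
      _ = bb4 ^ a * (u * b) := by ring
      _ = bb4 ^ a * (bb4 * u) := by rw [h]
      _ = bb4 ^ (a+1) * u := by ring

end Pump

namespace Stmt4Aux
open MVar

lemma stage2 (n : ℕ) (m1 m2 : ℕ) (h : m1 + m2 = en n) :
    (monomial (Finsupp.single vl 1 + Finsupp.single vcb m1 + Finsupp.single vc m2) 1 : MPoly n)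
      + monomial (Finsupp.single vs 1) 1 ∈ Ideal.span (FF n) := by
  rw [mem_iff_qk]
  have hmono : (monomial (Finsupp.single vl 1 + Finsupp.single vcb m1 + Finsupp.single vc m2) 1
      : MPoly n) = X vl * X vcb ^ m1 * X vc ^ m2 := by
    rw [X_pow_eq_monomial, X_pow_eq_monomial, X, monomial_mul, monomial_mul]; simp
  have hs : (monomial (Finsupp.single vs 1) 1 : MPoly n) = X vs := rfl
  rw [hmono, hs, map_mul, map_mul, map_pow, map_pow]
  show xq n vl * xq n vcb ^ m1 * xq n vc ^ m2 = xq n vs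
  have hln : (⟨n, Nat.lt_succ_self n⟩ : Fin (n+1)) = Fin.last n := rfl
  have hkeyF := key n false n (Nat.lt_succ_self n) 3
  have hkeyT := key n true n (Nat.lt_succ_self n) 3
  rw [hln] at hkeyF hkeyT
  have hp1 := pump1 (xq n vl) (xq n (vB false 3 (Fin.last n))) (xq n vb) (xq n vc) eG1
  have hp2 := pump1 (xq n vl) (xq n (vB false 3 (Fin.last n))) (xq n vbb) (xq n vcb) eG2
  have hp3 := pump2 (xq n (vC false 3 (Fin.last n)) * xq n (vS false (Fin.last n)))
      (xq n (vB true 3 (Fin.last n))) (xq n vb) (by rw [← mul_assoc]; exact eG5)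
  have hp4 := pump2 (xq n (vC false 3 (Fin.last n)) * xq n (vS false (Fin.last n)))
      (xq n (vB true 3 (Fin.last n))) (xq n vbb) (by rw [← mul_assoc]; exact eG6)
  set B := xq n (vB false 3 (Fin.last n))
  set Bb := xq n (vB true 3 (Fin.last n))
  set CS := xq n (vC false 3 (Fin.last n)) * xq n (vS false (Fin.last n))
  calc xq n vl * xq n vcb ^ m1 * xq n vc ^ m2
      = (xq n vl * xq n vc ^ m2) * xq n vcb ^ m1 := by ring
    _ = (B ^ m2 * xq n vl * xq n vb ^ m2) * xq n vcb ^ m1 := by rw [hp1]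
    _ = (B ^ m2 * xq n vb ^ m2) * (xq n vl * xq n vcb ^ m1) := by ring
    _ = (B ^ m2 * xq n vb ^ m2) * (B ^ m1 * xq n vl * xq n vbb ^ m1) := by rw [hp2]
    _ = B ^ (m1 + m2) * xq n vl * xq n vb ^ m2 * xq n vbb ^ m1 := by
          rw [pow_add]; ring
    _ = B ^ (m1 + m2) * (xq n (vC false 3 (Fin.last n)) * xq n (vF false (Fin.last n)))
          * xq n vb ^ m2 * xq n vbb ^ m1 := by rw [eG3]
    _ = (B ^ en n * xq n (vC false 3 (Fin.last n)) * xq n (vF false (Fin.last n)))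
          * xq n vb ^ m2 * xq n vbb ^ m1 := by rw [h]; ring
    _ = CS * xq n vb ^ m2 * xq n vbb ^ m1 := by rw [← hkeyF]
    _ = (CS * xq n vb ^ m2) * xq n vbb ^ m1 := by ring
    _ = (Bb ^ m2 * CS) * xq n vbb ^ m1 := by rw [hp3]
    _ = Bb ^ m2 * (CS * xq n vbb ^ m1) := by ring
    _ = Bb ^ m2 * (Bb ^ m1 * CS) := by rw [hp4]
    _ = Bb ^ en n * CS := by rw [← h, pow_add]; ring
    _ = Bb ^ en n * (xq n (vC true 3 (Fin.last n)) * xq n (vF true (Fin.last n))) := by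
          rw [eG4]
    _ = xq n (vC true 3 (Fin.last n)) * xq n (vS true (Fin.last n)) := by
          rw [hkeyT]; ring
    _ = xq n vs := eG7

end Stmt4Aux
namespace Stmt4Aux
open MVar

/-- The monomial `ℓ c̄^{m1} c^{m2}`. -/
noncomputable def am (n : ℕ) (m1 m2 : ℕ) : Mon (MVar n) :=
  Finsupp.single vl 1 + Finsupp.single vcb m1 + Finsupp.single vc m2

lemma am_vl {n m1 m2} : am n m1 m2 vl = 1 := by
  simp [am, Finsupp.single_apply]

lemma am_vcb {n m1 m2} : am n m1 m2 vcb = m1 := by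
  simp [am, Finsupp.single_apply]

lemma am_vc {n m1 m2} : am n m1 m2 vc = m2 := by
  simp [am, Finsupp.single_apply]

lemma am_other {n m1 m2} {x : MVar n} (h1 : x ≠ vl) (h2 : x ≠ vcb) (h3 : x ≠ vc) :
    am n m1 m2 x = 0 := by
  simp [am, Finsupp.single_apply, Ne.symm h1, Ne.symm h2, Ne.symm h3]

lemma am_ne_s {n m1 m2} : am n m1 m2 ≠ Finsupp.single vs 1 := by
  intro h
  have := DFunLike.congr_fun h vl
  rw [am_vl, Finsupp.single_apply] at this
  simp at this

lemma am_sum {n m1 m2} : (am n m1 m2).sum (fun _ e => e) = 1 + m1 + m2 := by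
  rw [am, Finsupp.sum_add_index' (fun _ => rfl) (fun _ _ _ => rfl),
    Finsupp.sum_add_index' (fun _ => rfl) (fun _ _ _ => rfl),
    Finsupp.sum_single_index rfl, Finsupp.sum_single_index rfl,
    Finsupp.sum_single_index rfl]

lemma isHT_unique {σ : Type*} (μ : MonOrd σ) {f : MvPolynomial σ (ZMod 2)} {t u : Mon σ}
    (h1 : IsHT μ.le f t) (h2 : IsHT μ.le f u) : t = u :=
  μ.le_antisymm t u (h2.2 t h1.1) (h1.2 u h2.1)

end Stmt4Aux

open MVar in
/-- If `≼` is a monomial order on the monomials of `Z2[X]` with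
(i) `s ≺ α` for every `α ∈ C`, and (ii) for every `g ∈ D` and polynomial `f` with
`g + f ∈ ⟨𝓕⟩` one has `g ≼ f`, then every reduced Gröbner basis `G` of `⟨𝓕⟩` w.r.t. `≼`
satisfies `|G| ≥ 2^(2^n)` and `|{p ∈ G : deg p ≥ 2^(2^n)}| ≥ 2^(2^n)`. -/
theorem stmt4 (n : ℕ) (μ : MonOrd (MVar n))
    (h1 : ∀ α ∈ Cmon n, μ.lt (Finsupp.single vs 1) α)
    (h2 : ∀ g ∈ Dmon n, ∀ f : MPoly n,
      (monomial g 1 : MPoly n) + f ∈ Ideal.span (FF n) → polyLe μ.le (monomial g 1) f)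
    (G : Finset (MPoly n)) (hG : IsReducedGB μ.le G (Ideal.span (FF n))) :
    en n ≤ G.card ∧ en n ≤ (G.filter fun p => en n ≤ p.totalDegree).card := by
  classical
  obtain ⟨⟨hGsub, hGspan, hHT⟩, -⟩ := hG
  have main : ∀ m1 : ℕ, m1 ≤ en n →
      ∃ g ∈ G, IsHT μ.le g (Stmt4Aux.am n m1 (en n - m1)) := by
    intro m1 hm1
    set m2 := en n - m1 with hm2
    have hsum : m1 + m2 = en n := Nat.add_sub_cancel' hm1
    set α := Stmt4Aux.am n m1 m2 with hα
    set β : Mon (MVar n) := Finsupp.single vs 1 with hβ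
    have hαβ : α ≠ β := Stmt4Aux.am_ne_s
    set fα : MPoly n := monomial α 1 + monomial β 1 with hfα
    have hmem : fα ∈ Ideal.span (FF n) := Stmt4Aux.stage2 n m1 m2 hsum
    have hcα : coeff α fα = 1 := by
      rw [hfα, coeff_add, coeff_monomial, coeff_monomial, if_pos rfl,
        if_neg (fun e => hαβ e.symm), add_zero]
    have hcβ : coeff β fα = 1 := by
      rw [hfα, coeff_add, coeff_monomial, coeff_monomial, if_pos rfl, if_neg hαβ, zero_add]
    have hαsup : α ∈ fα.support := mem_support_iff.mpr (by rw [hcα]; exact one_ne_zero)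
    have hαC : α ∈ Cmon n := ⟨m1, m2, hsum, rfl⟩
    have hHTα : IsHT μ.le fα α := by
      refine ⟨hαsup, fun u hu => ?_⟩
      have : u = α ∨ u = β := by
        by_contra hc
        push_neg at hc
        have := mem_support_iff.mp hu
        rw [hfα, coeff_add, coeff_monomial, coeff_monomial, if_neg (fun e => hc.1 e.symm),
          if_neg (fun e => hc.2 e.symm), add_zero] at this
        exact this rfl
      rcases this with rfl | rfl
      · exact μ.le_refl _
      · exact (h1 α hαC).1
    have hf0 : fα ≠ 0 := fun h0 => one_ne_zero (by rw [← hcα, h0, coeff_zero])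
    have hin : (monomial α 1 : MPoly n) ∈
        Ideal.span (HTset μ.le ((G : Set (MPoly n)))) := by
      rw [← hHT]
      exact Ideal.subset_span ⟨fα, hmem, hf0, α, hHTα, rfl⟩
    have himg : HTset μ.le ((G : Set (MPoly n)))
        = (fun t => (monomial t 1 : MPoly n)) ''
          {t | ∃ g ∈ (G : Set (MPoly n)), g ≠ 0 ∧ IsHT μ.le g t} := by
      ext p
      constructor
      · rintro ⟨f, hf, hf0, t, hht, rfl⟩
        exact ⟨t, ⟨f, hf, hf0, hht⟩, rfl⟩
      · rintro ⟨t, ⟨f, hf, hf0, hht⟩, rfl⟩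
        exact ⟨f, hf, hf0, t, hht, rfl⟩
    rw [himg] at hin
    have hαα : α ∈ (monomial α 1 : MPoly n).support :=
      mem_support_iff.mpr (by rw [coeff_monomial, if_pos rfl]; exact one_ne_zero)
    obtain ⟨t, ⟨g, hgG, hg0, hht⟩, htle⟩ :=
      MvPolynomial.mem_ideal_span_monomial_image.mp hin α hαα
    have hteq : t = α := by
      by_contra hne
      have hle : ∀ x, t x ≤ α x := Finsupp.le_def.mp htle
      have ht_eq : t = Finsupp.single vl (t vl) + Finsupp.single vcb (t vcb)
          + Finsupp.single vc (t vc) := by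
        ext x
        by_cases e1 : x = vl
        · subst e1; simp [Finsupp.single_apply]
        · by_cases e2 : x = vcb
          · subst e2; simp [Finsupp.single_apply]
          · by_cases e3 : x = vc
            · subst e3; simp [Finsupp.single_apply]
            · have h0 : α x = 0 := Stmt4Aux.am_other e1 e2 e3
              have := hle x
              rw [h0, Nat.le_zero] at this
              rw [this]
              simp [Finsupp.single_apply, Ne.symm e1, Ne.symm e2, Ne.symm e3]
      have hj : t vl ≤ 1 := by have := hle vl; rwa [Stmt4Aux.am_vl] at this
      have ha : t vcb ≤ m1 := by have := hle vcb; rwa [Stmt4Aux.am_vcb] at this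
      have hb : t vc ≤ m2 := by have := hle vc; rwa [Stmt4Aux.am_vc] at this
      have hstrict : t vl < 1 ∨ t vcb < m1 ∨ t vc < m2 := by
        by_contra hc
        push_neg at hc
        apply hne
        have e1 : t vl = 1 := le_antisymm hj hc.1
        have e2 : t vcb = m1 := le_antisymm ha hc.2.1
        have e3 : t vc = m2 := le_antisymm hb hc.2.2
        rw [ht_eq, e1, e2, e3]
        rfl
      have hsum' : t vl + t vcb + t vc ≤ en n := by omega
      have htD : t ∈ Dmon n := ⟨t vl, t vcb, t vc, hj, hsum', ht_eq⟩
      have hgI : g ∈ Ideal.span (FF n) := hGsub hgG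
      have hcoefft : coeff t g = 1 := Stmt4Aux.zmod2_eq_one (mem_support_iff.mp hht.1)
      set f : MPoly n := g + monomial t 1 with hfdef
      have hgf : (monomial t 1 : MPoly n) + f = g := by
        rw [hfdef, add_comm g, ← add_assoc, CharTwo.add_self_eq_zero, zero_add]
      have hple := h2 t htD f (by rw [hgf]; exact hgI)
      have hcf : coeff t f = 0 := by
        rw [hfdef, coeff_add, hcoefft, coeff_monomial, if_pos rfl]
        decide
      have htf : t ∉ f.support := fun hmem' => (mem_support_iff.mp hmem') hcf
      have htm : t ∈ (monomial t 1 : MPoly n).support :=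
        mem_support_iff.mpr (by rw [coeff_monomial, if_pos rfl]; exact one_ne_zero)
      rcases hple with heq | ⟨u, huf, hut, hall⟩
      · exact htf (heq ▸ htm)
      · have hune : u ≠ t := by
          intro e; subst e
          exact hut (mem_support_iff.mpr
            (by rw [coeff_monomial, if_pos rfl]; exact one_ne_zero))
        have hug : u ∈ g.support := by
          have hc : coeff u f = coeff u g := by
            rw [hfdef, coeff_add, coeff_monomial, if_neg (fun e => hune e.symm), add_zero]
          exact mem_support_iff.mpr (by rw [← hc]; exact mem_support_iff.mp huf)
        have hle1 : μ.le u t := hht.2 u hug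
        have hle2 : μ.le t u := hall t (Or.inr ⟨htm, htf⟩)
        exact hune (μ.le_antisymm u t hle1 hle2)
    exact ⟨g, hgG, hteq ▸ hht⟩
  have hex : ∀ m1 : ℕ, ∃ g, m1 ≤ en n →
      g ∈ G ∧ IsHT μ.le g (Stmt4Aux.am n m1 (en n - m1)) := by
    intro m1
    by_cases h : m1 ≤ en n
    · obtain ⟨g, hg1, hg2⟩ := main m1 h
      exact ⟨g, fun _ => ⟨hg1, hg2⟩⟩
    · exact ⟨0, fun h' => absurd h' h⟩
  choose gf hgf using hex
  have hmaps : ∀ m1 ∈ Finset.range (en n),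
      gf m1 ∈ G.filter (fun p => en n ≤ p.totalDegree) := by
    intro m1 hm1
    rw [Finset.mem_range] at hm1
    obtain ⟨hmem, hht⟩ := hgf m1 hm1.le
    refine Finset.mem_filter.mpr ⟨hmem, ?_⟩
    have hdeg := MvPolynomial.le_totalDegree hht.1
    rw [Stmt4Aux.am_sum] at hdeg
    omega
  have hinj : Set.InjOn gf ↑(Finset.range (en n)) := by
    intro a ha b hb hab
    rw [Finset.mem_coe, Finset.mem_range] at ha hb
    have ht1 := (hgf a ha.le).2
    have ht2 := (hgf b hb.le).2
    rw [hab] at ht1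
    have heq := Stmt4Aux.isHT_unique μ ht1 ht2
    have := DFunLike.congr_fun heq vcb
    rwa [Stmt4Aux.am_vcb, Stmt4Aux.am_vcb] at this
  have hcard : en n ≤ (G.filter (fun p => en n ≤ p.totalDegree)).card := by
    have h := Finset.card_le_card_of_injOn gf hmaps hinj
    simpa using h
  exact ⟨le_trans hcard (Finset.card_le_card (Finset.filter_subset _ _)), hcard⟩
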